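/- Let G and Ĝ be symmetric PSD N×N matrices, ℓ* convex, λN = 1, and define L(α) = −∑ℓ*(α_i) − (1/2)α^T G α, L̂(α) = −∑ℓ*(α_i) − (1/2)α^T Ĝ α on a convex domain K. If α* maximizes L over K and α̂* maximizes L̂ over K, then (α* − α̂*)^T (Ĝ − G) α* ≥ (α̂* − α*)^T G (α̂* − α*) + (α̂* − α*)^T (Ĝ − G)(α̂* − α*). -/

import Mathlib

/-!
Write `f a = ∑ i, ℓ*(aᵢ)`. A maximizer `x` of `-f a - ½ aᵀMa` over the convex set `K` satisfies the
variational inequality `f x - f y ≤ xᵀM(y - x)` for every `y ∈ K`. Adding this inequality for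
`(G, α*, α̂*)` and for `(Ĝ, α̂*, α*)` cancels `f` and leaves `α̂*ᵀĜd ≤ α*ᵀGd` with `d = α̂* - α*`,
which after expanding is the claim (using the symmetry of `G` and `Ĝ`).
-/

open Matrix

open Filter Set Topology in
theorem le_of_forall_le_add_mul {a b c : ℝ} (h : ∀ t ∈ Ioc (0 : ℝ) 1, c ≤ a + t * b) :
    c ≤ a := by
  have hlim : Tendsto (fun t : ℝ => a + t * b) (𝓝[>] 0) (𝓝 a) := by
    have hcont : Continuous fun t : ℝ => a + t * b := by fun_prop
    simpa using (hcont.tendsto 0).mono_left nhdsWithin_le_nhds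
  exact ge_of_tendsto hlim (eventually_of_mem (Ioc_mem_nhdsGT one_pos) h)

theorem convexOn_sum_apply {ι : Type*} [Fintype ι] {φ : ℝ → ℝ} (hφ : ConvexOn ℝ Set.univ φ) :
    ConvexOn ℝ Set.univ fun a : ι → ℝ => ∑ i, φ (a i) := by
  refine ⟨convex_univ, fun x _ y _ s t hs ht hst => ?_⟩
  simp only [Pi.add_apply, Pi.smul_apply, smul_eq_mul, Finset.mul_sum, ← Finset.sum_add_distrib]
  exact Finset.sum_le_sum fun i _ => hφ.2 trivial trivial hs ht hst

namespace Matrix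

variable {n : Type*} [Fintype n] {M : Matrix n n ℝ}

theorem IsSymm.dotProduct_mulVec_comm (hM : M.IsSymm) (u v : n → ℝ) :
    u ⬝ᵥ M *ᵥ v = v ⬝ᵥ M *ᵥ u := by
  rw [dotProduct_mulVec, ← mulVec_transpose, hM.eq, dotProduct_comm]

theorem IsSymm.dotProduct_mulVec_add_smul (hM : M.IsSymm) (x v : n → ℝ) (t : ℝ) :
    (x + t • v) ⬝ᵥ M *ᵥ (x + t • v) =
      x ⬝ᵥ M *ᵥ x + 2 * t * (x ⬝ᵥ M *ᵥ v) + t ^ 2 * (v ⬝ᵥ M *ᵥ v) := by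
  simp only [mulVec_add, mulVec_smul, dotProduct_add, add_dotProduct, dotProduct_smul,
    smul_dotProduct, smul_eq_mul, hM.dotProduct_mulVec_comm v x]
  ring

/-- Compare `x` with the points `x + t • (y - x)` of the segment to `y` and let `t → 0⁺`. -/
theorem IsSymm.sub_le_dotProduct_mulVec_of_isMaxOn {K : Set (n → ℝ)} {f : (n → ℝ) → ℝ}
    (hf : ConvexOn ℝ K f) (hM : M.IsSymm) {x y : n → ℝ} (hx : x ∈ K) (hy : y ∈ K)
    (hmax : IsMaxOn (fun a => -f a - (1 / 2) * (a ⬝ᵥ M *ᵥ a)) K x) :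
    f x - f y ≤ x ⬝ᵥ M *ᵥ (y - x) := by
  set v := y - x
  refine le_of_forall_le_add_mul (b := (1 / 2) * (v ⬝ᵥ M *ᵥ v)) fun t ⟨ht0, ht1⟩ => ?_
  have hseg : x + t • v = (1 - t) • x + t • y := by
    rw [smul_sub, sub_smul, one_smul]; abel
  have hmem : x + t • v ∈ K := hseg ▸ hf.1 hx hy (by linarith) ht0.le (by ring)
  have hconv : f (x + t • v) ≤ (1 - t) * f x + t * f y := by
    simpa only [hseg, smul_eq_mul] using hf.2 hx hy (by linarith) ht0.le (by ring)
  have hopt := isMaxOn_iff.mp hmax _ hmem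
  rw [hM.dotProduct_mulVec_add_smul] at hopt
  have hscaled : t * (f x - f y) ≤ t * (x ⬝ᵥ M *ᵥ v + t * ((1 / 2) * (v ⬝ᵥ M *ᵥ v))) := by
    linarith
  exact le_of_mul_le_mul_left hscaled ht0

end Matrix

/-- Comparison of the maximizers of `L` and `L̂` (with `λN = 1`):
`(α* − α̂*)ᵀ(Ĝ − G)α* ≥ (α̂* − α*)ᵀG(α̂* − α*) + (α̂* − α*)ᵀ(Ĝ − G)(α̂* − α*)`. -/
theorem dual_maximizer_comparison {N : ℕ}
    (K : Set (Fin N → ℝ)) (hK : Convex ℝ K)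
    (lstar : ℝ → ℝ) (hl : ConvexOn ℝ Set.univ lstar)
    (G Gh : Matrix (Fin N) (Fin N) ℝ) (hG : G.PosSemidef) (hGh : Gh.PosSemidef)
    (L Lh : (Fin N → ℝ) → ℝ)
    (hL : ∀ a : Fin N → ℝ, L a = -(∑ i, lstar (a i)) - (1 / 2) * (a ⬝ᵥ G.mulVec a))
    (hLh : ∀ a : Fin N → ℝ, Lh a = -(∑ i, lstar (a i)) - (1 / 2) * (a ⬝ᵥ Gh.mulVec a))
    (as ah : Fin N → ℝ) (hasmem : as ∈ K) (hahmem : ah ∈ K)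
    (hasmax : ∀ a ∈ K, L a ≤ L as) (hahmax : ∀ a ∈ K, Lh a ≤ Lh ah) :
    (as - ah) ⬝ᵥ (Gh - G).mulVec as ≥
      (ah - as) ⬝ᵥ G.mulVec (ah - as) + (ah - as) ⬝ᵥ (Gh - G).mulVec (ah - as) := by
  have hf := (convexOn_sum_apply hl).subset (Set.subset_univ K) hK
  have hGs : G.IsSymm := isHermitian_iff_isSymm.mp hG.isHermitian
  have hGhs : Gh.IsSymm := isHermitian_iff_isSymm.mp hGh.isHermitian
  have hopt_as := hGs.sub_le_dotProduct_mulVec_of_isMaxOn hf hasmem hahmem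
    (isMaxOn_iff.mpr fun a ha => by simpa only [hL] using hasmax a ha)
  have hopt_ah := hGhs.sub_le_dotProduct_mulVec_of_isMaxOn hf hahmem hasmem
    (isMaxOn_iff.mpr fun a ha => by simpa only [hLh] using hahmax a ha)
  simp only [sub_mulVec, mulVec_sub, dotProduct_sub, sub_dotProduct] at hopt_as hopt_ah ⊢
  linarith [hGs.dotProduct_mulVec_comm as ah, hGhs.dotProduct_mulVec_comm as ah]
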